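/- Let n ≥ 1. There exists a constant C > 0 such that every continuous function f in H^{1,∞}_fin(ℝ^n) admits a finite decomposition f = ∑_{j=1}^N λ_j a_j in which each a_j is a CONTINUOUS (1,∞)-atom and ∑_{j=1}^N |λ_j| ≤ C‖f‖_{H¹(ℝ^n)}. -/

import Mathlib

open MeasureTheory Metric Filter

noncomputable section

/-- Euclidean space `ℝⁿ`. -/
abbrev E (n : ℕ) := EuclideanSpace ℝ (Fin n)

/-- A `(1,∞)`-atom on `ℝⁿ`: a bounded measurable function supported in a closed ball `B`,
with integral zero and `‖a‖_∞ ≤ |B|⁻¹`. -/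
def IsInftyAtom (n : ℕ) (a : E n → ℝ) : Prop :=
  ∃ (x : E n) (r : ℝ), 0 < r ∧
    MemLp a ⊤ volume ∧
    (∀ y, y ∉ closedBall x r → a y = 0) ∧
    (∫ y, a y) = 0 ∧
    eLpNorm a ⊤ volume ≤ (volume (closedBall x r))⁻¹

/-- `f` is a finite linear combination of atoms (membership in `H^{1,∞}_fin`). -/
def MemH1Fin (n : ℕ) (Atom : (E n → ℝ) → Prop) (f : E n → ℝ) : Prop :=
  ∃ (N : ℕ) (l : Fin N → ℝ) (a : Fin N → E n → ℝ),
    (∀ j, Atom (a j)) ∧ ∀ x, f x = ∑ j, l j * a j x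

/-- The atomic Hardy norm `‖f‖_{H¹}`: the infimum of `∑_j |λ_j|` over all decompositions
`f = ∑_j λ_j a_j` into atoms, the series converging in `L¹`. -/
def H1Norm (n : ℕ) (Atom : (E n → ℝ) → Prop) (f : E n → ℝ) : ℝ :=
  sInf { c : ℝ | ∃ (l : ℕ → ℝ) (a : ℕ → E n → ℝ),
    (∀ j, Atom (a j)) ∧ Summable (fun j => |l j|) ∧
    Tendsto (fun N => eLpNorm (fun x => f x - ∑ j ∈ Finset.range N, l j * a j x) 1 volume)
      atTop (nhds 0) ∧
    (∑' j, |l j|) = c }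

/-!
Fix an `L¹`-convergent atomic decomposition `f = ∑ λⱼ aⱼ` with `∑ |λⱼ| < 2 ‖f‖_{H¹}`. Since `f` is
uniformly continuous, mollifying at a small scale `t` and truncating at a large index `N` make
`r = f - ∑_{j<N} λⱼ (ψ_t ⋆ aⱼ)` uniformly as small as we like, and each `ψ_t ⋆ aⱼ` is a continuous
multiple, by a factor at most `4ⁿ`, of an atom. The balls of these atoms may lie far from the support
`closedBall 0 R` of `f`, so every piece is multiplied by a `1/R`-Lipschitz cutoff `χ_R`, which fixes
`f`. Up to a multiple of one fixed bump `ψ₀` on `closedBall 0 (2R)`, a cut piece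
`(ψ_t ⋆ aⱼ) χ_R` is a combination of continuous atoms of uniformly bounded cost; for a small ball
meeting the slope of `χ_R` this needs a dyadic chain of bumps from the ball to `ψ₀`. Finally
`r χ_R` plus the accumulated multiple of `ψ₀` has mean zero, lives on `closedBall 0 (2R)` and is
uniformly small, so it is a single atom of cost at most `‖f‖_{H¹}`.
-/

open Function Set
open scoped Convolution Pointwise
open ContinuousLinearMap (lsmul lsmul_apply)

namespace ContinuousAtoms

variable {n : ℕ}

section FiniteMeasureSet

variable {X : Type*} [MeasurableSpace X] {μ : Measure X} {g : X → ℝ} {s : Set X} {M : ℝ}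

lemma abs_integral_le_of_support_subset (hs : μ s ≠ ⊤) (hsupp : support g ⊆ s)
    (hM : ∀ᵐ y ∂μ, |g y| ≤ M) : |∫ y, g y ∂μ| ≤ M * μ.real s := by
  rw [← setIntegral_eq_integral_of_forall_compl_eq_zero (support_subset_iff'.mp hsupp)]
  exact norm_setIntegral_le_of_norm_le_const_ae (f := g) hs.lt_top (ae_restrict_of_ae hM)

lemma integrable_of_support_subset (hs : μ s ≠ ⊤) (hg : AEStronglyMeasurable g μ)
    (hsupp : support g ⊆ s) (hM : ∀ᵐ y ∂μ, |g y| ≤ M) : Integrable g μ :=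
  (integrableOn_iff_integrable_of_support_subset hsupp).mp <|
    Measure.integrableOn_of_bounded hs hg (ae_restrict_of_ae hM)

end FiniteMeasureSet

section Convolution

variable {G : Type*} [MeasurableSpace G] {μ : Measure G} {φ g : G → ℝ}

lemma abs_convolution_le_of_abs_le [AddGroup G] [MeasurableAdd G] [MeasurableNeg G]
    [μ.IsAddLeftInvariant] [μ.IsNegInvariant] {A : ℝ} (hφ : ∀ y, |φ y| ≤ A) (hg : Integrable g μ)
    (x : G) : |(φ ⋆[lsmul ℝ ℝ, μ] g) x| ≤ A * ∫ y, |g y| ∂μ := by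
  rw [convolution_def, ← integral_sub_left_eq_self (fun y => |g y|) μ x,
    ← integral_const_mul, ← Real.norm_eq_abs]
  refine norm_integral_le_of_norm_le ((hg.comp_sub_left x).abs.const_mul A)
    (ae_of_all _ fun t => ?_)
  simp only [lsmul_apply, smul_eq_mul, norm_mul, Real.norm_eq_abs]
  exact mul_le_mul_of_nonneg_right (hφ t) (abs_nonneg _)

lemma abs_convolution_le_of_ae_abs_le [AddGroup G] [MeasurableAdd₂ G] [MeasurableNeg G]
    [SFinite μ] [μ.IsAddLeftInvariant] {B : ℝ} (hφ0 : ∀ y, 0 ≤ φ y) (hφ1 : ∫ y, φ y ∂μ = 1)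
    (hg : ∀ᵐ y ∂μ, |g y| ≤ B) (x : G) : |(φ ⋆[lsmul ℝ ℝ, μ] g) x| ≤ B := by
  have hg' : ∀ᵐ t ∂μ, |g (x - t)| ≤ B := (quasiMeasurePreserving_sub_left μ x).ae hg
  calc |(φ ⋆[lsmul ℝ ℝ, μ] g) x| ≤ ∫ t, φ t * B ∂μ := by
        rw [convolution_def, ← Real.norm_eq_abs]
        refine norm_integral_le_of_norm_le ((integrable_of_integral_eq_one hφ1).mul_const B)
          (hg'.mono fun t ht => ?_)
        simp only [lsmul_apply, smul_eq_mul, norm_mul, Real.norm_eq_abs, abs_of_nonneg (hφ0 t)]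
        exact mul_le_mul_of_nonneg_left ht (hφ0 t)
    _ = B := by rw [integral_mul_const, hφ1, one_mul]

lemma convolution_sub_sum_apply [AddCommGroup G] [TopologicalSpace G] [IsTopologicalAddGroup G]
    [BorelSpace G] [μ.IsAddLeftInvariant] [μ.IsNegInvariant] {ι : Type*} (s : Finset ι)
    (l : ι → ℝ) {f : G → ℝ} {g : ι → G → ℝ} (hφ : HasCompactSupport φ) (hφc : Continuous φ)
    (hf : LocallyIntegrable f μ) (hg : ∀ i, LocallyIntegrable (g i) μ) (x : G) :
    (φ ⋆[lsmul ℝ ℝ, μ] fun y => f y - ∑ i ∈ s, l i * g i y) x =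
      (φ ⋆[lsmul ℝ ℝ, μ] f) x - ∑ i ∈ s, l i * (φ ⋆[lsmul ℝ ℝ, μ] g i) x := by
  have hi : ∀ {h : G → ℝ}, LocallyIntegrable h μ → Integrable (fun t => φ t * h (x - t)) μ :=
    fun hh => hφ.convolutionExists_left (lsmul ℝ ℝ) hφc hh x
  simp only [convolution_def, lsmul_apply, smul_eq_mul, mul_sub, Finset.mul_sum,
    mul_left_comm (φ _)]
  rw [integral_sub (hi hf) (integrable_finsetSum _ fun i _ => (hi (hg i)).const_mul (l i)),
    integral_finsetSum _ fun i _ => (hi (hg i)).const_mul (l i)]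
  simp only [integral_const_mul]

end Convolution

lemma volume_real_closedBall_pos (x : E n) {r : ℝ} (hr : 0 < r) :
    0 < volume.real (closedBall x r) :=
  ENNReal.toReal_pos (measure_closedBall_pos volume x hr).ne' measure_closedBall_lt_top.ne

lemma volume_real_closedBall_le_pow_mul {x y : E n} {r s c : ℝ} (hr : 0 ≤ r) (hs : 0 < s)
    (hrs : r ≤ c * s) :
    volume.real (closedBall x r) ≤ c ^ n * volume.real (closedBall y s) := by
  rw [Measure.addHaar_real_closedBall' _ _ hr, Measure.addHaar_real_closedBall' _ _ hs.le,
    finrank_euclideanSpace_fin, ← mul_assoc, ← mul_pow]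
  gcongr

lemma isInftyAtom_of_abs_le {a : E n → ℝ} {x : E n} {r : ℝ} (hr : 0 < r)
    (ha : AEStronglyMeasurable a volume) (hsupp : support a ⊆ closedBall x r)
    (hint : ∫ y, a y = 0) (hbound : ∀ y, |a y| ≤ (volume.real (closedBall x r))⁻¹) :
    IsInftyAtom n a := by
  have hbound' : ∀ᵐ y, ‖a y‖ ≤ (volume.real (closedBall x r))⁻¹ := ae_of_all _ hbound
  refine ⟨x, r, hr, memLp_top_of_bound ha _ hbound', support_subset_iff'.mp hsupp, hint, ?_⟩
  calc eLpNorm a ⊤ volume ≤ ENNReal.ofReal (volume.real (closedBall x r))⁻¹ := by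
        simpa using eLpNorm_le_of_ae_bound (p := ⊤) hbound'
    _ = (volume (closedBall x r))⁻¹ := by
        rw [ENNReal.ofReal_inv_of_pos (volume_real_closedBall_pos x hr), measureReal_def,
          ENNReal.ofReal_toReal measure_closedBall_lt_top.ne]

lemma isInftyAtom_zero : IsInftyAtom n 0 :=
  isInftyAtom_of_abs_le (x := 0) one_pos aestronglyMeasurable_zero (by simp) (by simp)
    fun _ => by simp

section Atom

variable {a : E n → ℝ}

lemma _root_.IsInftyAtom.integral_eq_zero (ha : IsInftyAtom n a) : ∫ y, a y = 0 :=
  let ⟨_, _, _, _, _, hint, _⟩ := ha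
  hint

lemma _root_.IsInftyAtom.exists_ae_abs_le (ha : IsInftyAtom n a) :
    ∃ x r, 0 < r ∧ support a ⊆ closedBall x r ∧
      ∀ᵐ y, |a y| ≤ (volume.real (closedBall x r))⁻¹ := by
  obtain ⟨x, r, hr, -, hsupp, -, hbound⟩ := ha
  refine ⟨x, r, hr, support_subset_iff'.mpr hsupp, ?_⟩
  filter_upwards [ae_le_eLpNormEssSup (f := a) (μ := volume)] with y hy
  have hy' : ENNReal.ofReal |a y| ≤ (volume (closedBall x r))⁻¹ := by
    rw [← Real.norm_eq_abs, ofReal_norm]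
    exact hy.trans (eLpNorm_exponent_top (f := a) ▸ hbound)
  rw [measureReal_def, ← ENNReal.toReal_inv]
  exact (ENNReal.ofReal_le_iff_le_toReal (by simp [(measure_closedBall_pos volume x hr).ne'])).mp
    hy'

lemma _root_.IsInftyAtom.aestronglyMeasurable (ha : IsInftyAtom n a) :
    AEStronglyMeasurable a volume :=
  let ⟨_, _, _, hmem, _⟩ := ha
  hmem.aestronglyMeasurable

lemma _root_.IsInftyAtom.integrable (ha : IsInftyAtom n a) : Integrable a volume :=
  let ⟨_, _, _, hsupp, hbound⟩ := ha.exists_ae_abs_le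
  integrable_of_support_subset measure_closedBall_lt_top.ne ha.aestronglyMeasurable hsupp hbound

lemma _root_.IsInftyAtom.integral_abs_le_one (ha : IsInftyAtom n a) : ∫ y, |a y| ≤ 1 := by
  obtain ⟨x, r, hr, hsupp, hbound⟩ := ha.exists_ae_abs_le
  calc ∫ y, |a y| ≤ |(∫ y, |a y|)| := le_abs_self _
    _ ≤ (volume.real (closedBall x r))⁻¹ * volume.real (closedBall x r) :=
        abs_integral_le_of_support_subset measure_closedBall_lt_top.ne (by simpa using hsupp)
          (by simpa using hbound)
    _ = 1 := inv_mul_cancel₀ (volume_real_closedBall_pos x hr).ne'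

lemma _root_.IsInftyAtom.eLpNorm_one_le_one (ha : IsInftyAtom n a) :
    eLpNorm a 1 volume ≤ 1 := by
  rw [eLpNorm_one_eq_lintegral_enorm, ← ofReal_integral_norm_eq_lintegral_enorm ha.integrable,
    ← ENNReal.ofReal_one]
  exact ENNReal.ofReal_le_ofReal ha.integral_abs_le_one

end Atom

section H1

variable {f : E n → ℝ}

lemma _root_.MemH1Fin.integrable (hf : MemH1Fin n (IsInftyAtom n) f) : Integrable f volume := by
  obtain ⟨N, l, a, ha, hfa⟩ := hf
  rw [show f = fun x => ∑ j, l j * a j x from funext hfa]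
  exact integrable_finsetSum _ fun j _ => (ha j).integrable.const_mul (l j)

lemma _root_.MemH1Fin.integral_eq_zero (hf : MemH1Fin n (IsInftyAtom n) f) : ∫ y, f y = 0 := by
  obtain ⟨N, l, a, ha, hfa⟩ := hf
  simp_rw [hfa]
  rw [integral_finsetSum _ fun j _ => (ha j).integrable.const_mul (l j)]
  simp [integral_const_mul, fun j => (ha j).integral_eq_zero]

lemma _root_.MemH1Fin.isBounded_support (hf : MemH1Fin n (IsInftyAtom n) f) :
    Bornology.IsBounded (support f) := by
  obtain ⟨N, l, a, ha, hfa⟩ := hf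
  refine (Bornology.isBounded_iUnion (s := fun j => support (a j)) |>.mpr fun j => ?_).subset
    fun y hy => ?_
  · obtain ⟨x, r, -, hsupp, -⟩ := (ha j).exists_ae_abs_le
    exact isBounded_closedBall.subset hsupp
  · rw [mem_support, hfa] at hy
    obtain ⟨j, -, hj⟩ := Finset.exists_ne_zero_of_sum_ne_zero hy
    exact mem_iUnion.mpr ⟨j, right_ne_zero_of_mul hj⟩

def h1Costs (n : ℕ) (Atom : (E n → ℝ) → Prop) (f : E n → ℝ) : Set ℝ :=
  { c : ℝ | ∃ (l : ℕ → ℝ) (a : ℕ → E n → ℝ),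
    (∀ j, Atom (a j)) ∧ Summable (fun j => |l j|) ∧
    Tendsto (fun N => eLpNorm (fun x => f x - ∑ j ∈ Finset.range N, l j * a j x) 1 volume)
      atTop (nhds 0) ∧
    (∑' j, |l j|) = c }

lemma nonneg_of_mem_h1Costs {Atom : (E n → ℝ) → Prop} {c : ℝ} (hc : c ∈ h1Costs n Atom f) :
    0 ≤ c := by
  obtain ⟨l, a, -, -, -, rfl⟩ := hc
  exact tsum_nonneg fun _ => abs_nonneg _

lemma h1Norm_nonneg (Atom : (E n → ℝ) → Prop) (f : E n → ℝ) : 0 ≤ H1Norm n Atom f :=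
  Real.sInf_nonneg fun _ => nonneg_of_mem_h1Costs

lemma _root_.MemH1Fin.h1Costs_nonempty {Atom : (E n → ℝ) → Prop} (h0 : Atom 0)
    (hf : MemH1Fin n Atom f) : (h1Costs n Atom f).Nonempty := by
  classical
  obtain ⟨N, l, a, ha, hfa⟩ := hf
  let l' : ℕ → ℝ := fun j => if h : j < N then l ⟨j, h⟩ else 0
  let a' : ℕ → E n → ℝ := fun j => if h : j < N then a ⟨j, h⟩ else 0
  have hl' : ∀ j ∉ Finset.range N, l' j = 0 := fun j hj => by simp_all [l']
  have hsum : ∀ M ≥ N, ∀ x, ∑ j ∈ Finset.range M, l' j * a' j x = f x := by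
    intro M hM x
    rw [← Finset.sum_subset (Finset.range_subset_range.mpr hM) fun j _ hj => by simp [hl' j hj],
      ← Fin.sum_univ_eq_sum_range (fun j => l' j * a' j x), hfa]
    simp [l', a']
  refine ⟨_, l', a', fun j => ?_, summable_of_ne_finset_zero (s := Finset.range N)
    fun j hj => by simp [hl' j hj],
    tendsto_atTop_of_eventually_const (i₀ := N) fun M hM => ?_, rfl⟩
  · by_cases h : j < N <;> simp [a', h, ha, h0]
  · simp [hsum M hM]

lemma eLpNorm_one_le_of_mem_h1Costs (hf : AEStronglyMeasurable f volume) {c : ℝ}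
    (hc : c ∈ h1Costs n (IsInftyAtom n) f) : eLpNorm f 1 volume ≤ ENNReal.ofReal c := by
  obtain ⟨l, a, ha, hl, htend, rfl⟩ := hc
  have hlim := htend.add_const (ENNReal.ofReal (∑' j, |l j|))
  rw [zero_add] at hlim
  refine ge_of_tendsto hlim (Eventually.of_forall fun N => ?_)
  set S : E n → ℝ := ∑ j ∈ Finset.range N, l j • a j
  have hS : AEStronglyMeasurable S volume :=
    Finset.aestronglyMeasurable_sum _ fun j _ => (ha j).aestronglyMeasurable.const_smul _
  have hSle : eLpNorm S 1 volume ≤ ENNReal.ofReal (∑' j, |l j|) := calc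
    eLpNorm S 1 volume ≤ ∑ j ∈ Finset.range N, eLpNorm (l j • a j) 1 volume :=
        eLpNorm_sum_le (fun j _ => (ha j).aestronglyMeasurable.const_smul _) le_rfl
    _ ≤ ∑ j ∈ Finset.range N, ENNReal.ofReal |l j| := by
        gcongr with j
        rw [eLpNorm_const_smul, ← ofReal_norm, Real.norm_eq_abs]
        exact mul_le_of_le_one_right' (ha j).eLpNorm_one_le_one
    _ = ENNReal.ofReal (∑ j ∈ Finset.range N, |l j|) :=
        (ENNReal.ofReal_sum_of_nonneg fun j _ => abs_nonneg _).symm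
    _ ≤ ENNReal.ofReal (∑' j, |l j|) :=
        ENNReal.ofReal_le_ofReal (hl.sum_le_tsum _ fun j _ => abs_nonneg _)
  calc eLpNorm f 1 volume = eLpNorm ((f - S) + S) 1 volume := by rw [sub_add_cancel]
    _ ≤ eLpNorm (f - S) 1 volume + eLpNorm S 1 volume := eLpNorm_add_le (hf.sub hS) hS le_rfl
    _ ≤ _ := by
        gcongr
        exact le_of_eq (congrArg (eLpNorm · 1 volume) (funext fun x => by simp [S]))

lemma _root_.MemH1Fin.eLpNorm_one_le_h1Norm (hf : MemH1Fin n (IsInftyAtom n) f) :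
    eLpNorm f 1 volume ≤ ENNReal.ofReal (H1Norm n (IsInftyAtom n) f) := by
  have hfi := hf.integrable
  rw [ENNReal.le_ofReal_iff_toReal_le (memLp_one_iff_integrable.mpr hfi).eLpNorm_ne_top
    (h1Norm_nonneg _ f)]
  refine le_csInf (hf.h1Costs_nonempty isInftyAtom_zero) fun c hc =>
    (ENNReal.le_ofReal_iff_toReal_le (memLp_one_iff_integrable.mpr hfi).eLpNorm_ne_top
      (nonneg_of_mem_h1Costs hc)).mp (eLpNorm_one_le_of_mem_h1Costs hfi.aestronglyMeasurable hc)

lemma _root_.MemH1Fin.eq_zero_of_h1Norm_eq_zero (hf : MemH1Fin n (IsInftyAtom n) f)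
    (hfc : Continuous f) (h0 : H1Norm n (IsInftyAtom n) f = 0) : f = 0 := by
  have := hf.eLpNorm_one_le_h1Norm
  rw [h0, ENNReal.ofReal_zero, nonpos_iff_eq_zero,
    eLpNorm_eq_zero_iff hfc.aestronglyMeasurable one_ne_zero] at this
  exact (hfc.ae_eq_iff_eq volume continuous_const).mp this

end H1

def HasContAtomDecomp (n : ℕ) (g : E n → ℝ) (C : ℝ) : Prop :=
  ∃ (N : ℕ) (l : Fin N → ℝ) (a : Fin N → E n → ℝ),
    (∀ j, IsInftyAtom n (a j) ∧ Continuous (a j)) ∧ (∀ x, g x = ∑ j, l j * a j x) ∧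
      ∑ j, |l j| ≤ C

namespace HasContAtomDecomp

variable {g g' : E n → ℝ} {C C' : ℝ}

lemma mono (h : HasContAtomDecomp n g C) (hC : C ≤ C') : HasContAtomDecomp n g C' :=
  let ⟨N, l, a, ha, hg, hl⟩ := h
  ⟨N, l, a, ha, hg, hl.trans hC⟩

lemma congr (h : HasContAtomDecomp n g C) (hg : ∀ x, g x = g' x) : HasContAtomDecomp n g' C :=
  let ⟨N, l, a, ha, hga, hl⟩ := h
  ⟨N, l, a, ha, fun x => (hg x).symm.trans (hga x), hl⟩

lemma zero (hC : 0 ≤ C) : HasContAtomDecomp n 0 C :=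
  ⟨0, Fin.elim0, Fin.elim0, fun j => j.elim0, by simp, by simpa using hC⟩

lemma add (h : HasContAtomDecomp n g C) (h' : HasContAtomDecomp n g' C') :
    HasContAtomDecomp n (g + g') (C + C') := by
  obtain ⟨N, l, a, ha, hg, hl⟩ := h
  obtain ⟨N', l', a', ha', hg', hl'⟩ := h'
  refine ⟨N + N', Fin.append l l', Fin.append a a',
    Fin.addCases (fun j => by simpa using ha j) (fun j => by simpa using ha' j), fun x => ?_, ?_⟩
  · simp [Fin.sum_univ_add, hg, hg']
  · simpa [Fin.sum_univ_add] using add_le_add hl hl'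

lemma const_mul (h : HasContAtomDecomp n g C) (t : ℝ) :
    HasContAtomDecomp n (fun x => t * g x) (|t| * C) := by
  obtain ⟨N, l, a, ha, hg, hl⟩ := h
  refine ⟨N, fun j => t * l j, a, ha, fun x => ?_, ?_⟩
  · simp [hg, Finset.mul_sum, mul_assoc]
  · simpa [abs_mul, ← Finset.mul_sum] using mul_le_mul_of_nonneg_left hl (abs_nonneg t)

lemma finset_sum {ι : Type*} (s : Finset ι) {g : ι → E n → ℝ} {C : ι → ℝ}
    (h : ∀ i ∈ s, HasContAtomDecomp n (g i) (C i)) :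
    HasContAtomDecomp n (∑ i ∈ s, g i) (∑ i ∈ s, C i) := by
  classical
  induction s using Finset.induction_on with
  | empty => exact zero le_rfl
  | insert i s hi ih =>
    rw [Finset.sum_insert hi, Finset.sum_insert hi]
    exact (h i (s.mem_insert_self i)).add (ih fun j hj => h j (Finset.mem_insert_of_mem hj))

lemma memH1Fin (h : HasContAtomDecomp n g C) : MemH1Fin n (IsInftyAtom n) g :=
  let ⟨N, l, a, ha, hg, _⟩ := h
  ⟨N, l, a, fun j => (ha j).1, hg⟩

lemma of_abs_le {x : E n} {r M : ℝ} (hr : 0 < r) (hg : Continuous g)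
    (hsupp : support g ⊆ closedBall x r) (hint : ∫ y, g y = 0) (hM : ∀ y, |g y| ≤ M) :
    HasContAtomDecomp n g (M * volume.real (closedBall x r)) := by
  set V := volume.real (closedBall x r)
  have hV : 0 < V := volume_real_closedBall_pos x hr
  have hM0 : 0 ≤ M := (abs_nonneg _).trans (hM x)
  set c := M * V
  have hc0 : 0 ≤ c := mul_nonneg hM0 hV.le
  have hatom : IsInftyAtom n fun y => g y / c := by
    refine isInftyAtom_of_abs_le (x := x) hr (hg.div_const c).aestronglyMeasurable ?_ ?_ fun y => ?_
    · exact (support_div (g ·) fun _ => c).trans_subset (inter_subset_left.trans hsupp)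
    · rw [integral_div, hint, zero_div]
    · rcases hc0.eq_or_lt with hc | hc
      · simp [← hc]
      · rw [abs_div, abs_of_pos hc, div_le_iff₀ hc, show V⁻¹ * c = M by field_simp [c]; ring]
        exact hM y
  refine ⟨1, fun _ => c, fun _ y => g y / c, fun _ => ⟨hatom, hg.div_const c⟩, fun y => ?_,
    by simp [abs_of_nonneg hc0]⟩
  rcases eq_or_ne c 0 with hc | hc
  · have hM0 : M = 0 := (mul_eq_zero.mp hc).resolve_right hV.ne'
    simp [abs_nonpos_iff.mp (hM0 ▸ hM y), hc]
  · simp [mul_div_cancel₀ _ hc]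

end HasContAtomDecomp

def normedBump (z : E n) {s : ℝ} (hs : 0 < s) : E n → ℝ :=
  (⟨s / 2, s, half_pos hs, half_lt_self hs⟩ : ContDiffBump z).normed volume

section NormedBump

variable (z : E n) {s : ℝ} (hs : 0 < s)

lemma continuous_normedBump : Continuous (normedBump z hs) := ContDiffBump.continuous_normed _

lemma normedBump_nonneg (y : E n) : 0 ≤ normedBump z hs y := ContDiffBump.nonneg_normed _ _

lemma integral_normedBump : ∫ y, normedBump z hs y = 1 := ContDiffBump.integral_normed _

lemma integrable_normedBump : Integrable (normedBump z hs) volume :=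
  ContDiffBump.integrable_normed _

lemma support_normedBump : support (normedBump z hs) = ball z s :=
  ContDiffBump.support_normed_eq _

lemma support_normedBump_subset : support (normedBump z hs) ⊆ closedBall z s :=
  (support_normedBump z hs).trans_subset ball_subset_closedBall

lemma hasCompactSupport_normedBump : HasCompactSupport (normedBump z hs) :=
  ContDiffBump.hasCompactSupport_normed _

lemma normedBump_le (y : E n) : normedBump z hs y ≤ 2 ^ n / volume.real (closedBall z s) := by
  have := ContDiffBump.normed_le_div_measure_closedBall_rOut
    (⟨s / 2, s, half_pos hs, half_lt_self hs⟩ : ContDiffBump z) volume 2 (by simp only; linarith) y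
  rwa [finrank_euclideanSpace_fin] at this

lemma abs_normedBump_le (y : E n) : |normedBump z hs y| ≤ 2 ^ n / volume.real (closedBall z s) :=
  (abs_of_nonneg (normedBump_nonneg z hs y)).trans_le (normedBump_le z hs y)

end NormedBump

def cutoff (R : ℝ) (y : E n) : ℝ := max 0 (min 1 (2 - ‖y‖ / R))

section Cutoff

variable {R : ℝ}

lemma continuous_cutoff : Continuous (cutoff (n := n) R) := by
  unfold cutoff; fun_prop

lemma abs_cutoff_le_one (y : E n) : |cutoff R y| ≤ 1 :=
  (abs_of_nonneg (le_max_left _ _)).trans_le (max_le zero_le_one (min_le_left _ _))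

lemma cutoff_eq_one (hR : 0 < R) {y : E n} (hy : ‖y‖ ≤ R) : cutoff R y = 1 := by
  have : 1 ≤ 2 - ‖y‖ / R := by rw [le_sub_comm, div_le_iff₀ hR]; linarith
  simp [cutoff, this]

lemma support_cutoff_subset (hR : 0 < R) : support (cutoff (n := n) R) ⊆ closedBall 0 (2 * R) := by
  refine support_subset_iff'.mpr fun y hy => ?_
  have : 2 - ‖y‖ / R ≤ 0 := by
    rw [mem_closedBall, dist_zero_right, not_le] at hy
    rw [sub_nonpos, le_div_iff₀ hR]; linarith
  simp [cutoff, min_le_of_right_le this]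

lemma abs_cutoff_sub_cutoff_le (hR : 0 < R) (y y' : E n) :
    |cutoff R y - cutoff R y'| ≤ ‖y - y'‖ / R := calc
  _ ≤ |min 1 (2 - ‖y‖ / R) - min 1 (2 - ‖y'‖ / R)| := by
      simpa only [cutoff, max_comm (0 : ℝ)] using abs_max_sub_max_le_abs _ _ 0
  _ ≤ |(2 - ‖y‖ / R) - (2 - ‖y'‖ / R)| := by
      simpa using abs_min_sub_min_le_max 1 (2 - ‖y‖ / R) 1 (2 - ‖y'‖ / R)
  _ = |‖y'‖ - ‖y‖| / R := by
      rw [show 2 - ‖y‖ / R - (2 - ‖y'‖ / R) = (‖y'‖ - ‖y‖) / R by ring, abs_div, abs_of_pos hR]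
  _ ≤ ‖y - y'‖ / R := by
      gcongr
      exact (abs_norm_sub_norm_le y' y).trans_eq (norm_sub_rev _ _)

lemma abs_mul_cutoff_sub_cutoff_le (hR : 0 < R) {b : E n → ℝ} {x : E n} {s M : ℝ} (hs : 0 ≤ s)
    (hsupp : support b ⊆ closedBall x s) (hM : ∀ y, |b y| ≤ M) (y : E n) :
    |b y * (cutoff R y - cutoff R x)| ≤ s / R * M := by
  by_cases hy : y ∈ closedBall x s
  · rw [abs_mul, mul_comm (s / R)]
    gcongr
    · exact (abs_nonneg _).trans (hM x)
    · exact hM y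
    · refine (abs_cutoff_sub_cutoff_le hR y x).trans ?_
      gcongr
      exact mem_closedBall_iff_norm.mp hy
  · rw [support_subset_iff'.mp hsupp y hy, zero_mul, abs_zero]
    exact mul_nonneg (div_nonneg hs hR.le) ((abs_nonneg _).trans (hM x))

end Cutoff

namespace HasContAtomDecomp

variable {g : E n → ℝ}

lemma sub_integral_mul_normedBump {z : E n} {s M : ℝ} (hs : 0 < s) (hg : Continuous g)
    (hsupp : support g ⊆ closedBall z s) (hM : ∀ y, |g y| ≤ M) :
    HasContAtomDecomp n (fun y => g y - (∫ w, g w) * normedBump z hs y)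
      ((1 + 2 ^ n) * M * volume.real (closedBall z s)) := by
  set V := volume.real (closedBall z s)
  have hV : 0 < V := volume_real_closedBall_pos z hs
  have hgi : Integrable g volume := integrable_of_support_subset measure_closedBall_lt_top.ne
    hg.aestronglyMeasurable hsupp (ae_of_all _ hM)
  have hI : |∫ w, g w| ≤ M * V :=
    abs_integral_le_of_support_subset measure_closedBall_lt_top.ne hsupp (ae_of_all _ hM)
  refine of_abs_le (g := fun y => g y - (∫ w, g w) * normedBump z hs y) hs
    (hg.sub (continuous_const.mul (continuous_normedBump z hs)))
    (support_subset_iff'.mpr fun y hy => ?_) ?_ fun y => ?_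
  · simp [support_subset_iff'.mp hsupp y hy,
      support_subset_iff'.mp (support_normedBump_subset z hs) y hy]
  · rw [integral_sub hgi ((integrable_normedBump z hs).const_mul _), integral_const_mul,
      integral_normedBump, mul_one, sub_self]
  · calc |g y - (∫ w, g w) * normedBump z hs y|
        ≤ |g y| + |∫ w, g w| * |normedBump z hs y| := by rw [← abs_mul]; exact abs_sub _ _
      _ ≤ M + M * V * (2 ^ n / V) := by
          gcongr
          exacts [hM y, (abs_nonneg _).trans hI, abs_normedBump_le z hs y]
      _ = (1 + 2 ^ n) * M := by field_simp

lemma normedBump_sub_normedBump {z z' w : E n} {s s' ρ K : ℝ} (hs : 0 < s) (hs' : 0 < s')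
    (hz : s + dist z w ≤ ρ) (hz' : s' + dist z' w ≤ ρ) (hρs : ρ ≤ K * s) (hρs' : ρ ≤ K * s') :
    HasContAtomDecomp n (fun y => normedBump z hs y - normedBump z' hs' y) (2 * (2 * K) ^ n) := by
  have hρ : 0 < ρ := by linarith [dist_nonneg (x := z) (y := w)]
  set V := volume.real (closedBall z s)
  set V' := volume.real (closedBall z' s')
  have hV : 0 < V := volume_real_closedBall_pos z hs
  have hV' : 0 < V' := volume_real_closedBall_pos z' hs'
  have hsub := closedBall_subset_closedBall' hz
  have hsub' := closedBall_subset_closedBall' hz'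
  refine (of_abs_le (g := fun y => normedBump z hs y - normedBump z' hs' y)
    (x := w) (M := 2 ^ n / V + 2 ^ n / V') hρ
    ((continuous_normedBump z hs).sub (continuous_normedBump z' hs'))
    (support_subset_iff'.mpr fun y hy => ?_) ?_ fun y => ?_).mono ?_
  · simp [support_subset_iff'.mp ((support_normedBump_subset z hs).trans hsub) y hy,
      support_subset_iff'.mp ((support_normedBump_subset z' hs').trans hsub') y hy]
  · rw [integral_sub (integrable_normedBump z hs) (integrable_normedBump z' hs'),
      integral_normedBump, integral_normedBump, sub_self]
  · exact (abs_sub _ _).trans (add_le_add (abs_normedBump_le z hs y) (abs_normedBump_le z' hs' y))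
  · have hVρ := volume_real_closedBall_le_pow_mul (x := w) (y := z) hρ.le hs hρs
    have hVρ' := volume_real_closedBall_le_pow_mul (x := w) (y := z') hρ.le hs' hρs'
    calc (2 ^ n / V + 2 ^ n / V') * volume.real (closedBall w ρ)
        = 2 ^ n * (volume.real (closedBall w ρ) / V) +
            2 ^ n * (volume.real (closedBall w ρ) / V') := by ring
      _ ≤ 2 ^ n * K ^ n + 2 ^ n * K ^ n := by
          gcongr
          exacts [(div_le_iff₀ hV).mpr hVρ, (div_le_iff₀ hV').mpr hVρ']
      _ = 2 * (2 * K) ^ n := by rw [mul_pow]; ring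

/-- Telescope through the radii `s, 2s, 4s, …` until the radius reaches `R`: every link costs
at most `2 · 12ⁿ`, and there are at most `2R/s` links. -/
lemma normedBump_sub_normedBump_zero {R : ℝ} (hR : 0 < R) {z : E n} (hz : ‖z‖ ≤ 4 * R) (k : ℕ)
    {s : ℝ} (hs : 0 < s) (hRs : R ≤ 2 ^ k * s) (hs2R : s ≤ 2 * R) :
    HasContAtomDecomp n (fun y => normedBump z hs y - normedBump 0 (mul_pos two_pos hR) y)
      (2 * 12 ^ n * (2 * R / s)) := by
  have top : ∀ {s} (hs : 0 < s), R ≤ s → s ≤ 2 * R → HasContAtomDecomp n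
      (fun y => normedBump z hs y - normedBump 0 (mul_pos two_pos hR) y)
      (2 * 12 ^ n * (2 * R / s)) := by
    intro s hs hRs hs2R
    refine (normedBump_sub_normedBump (w := 0) (ρ := 6 * R) (K := 6) hs _ ?_ ?_ ?_ ?_).mono ?_
    · rw [dist_zero_right]; linarith
    · simp only [dist_self]; linarith
    · linarith
    · linarith
    · rw [show (2 * 6 : ℝ) = 12 by norm_num]
      exact le_mul_of_one_le_right (by positivity) ((one_le_div hs).mpr hs2R)
  induction k generalizing s with
  | zero => exact top hs (by simpa using hRs) hs2R
  | succ k ih =>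
    rcases le_or_gt R s with hRs' | hsR
    · exact top hs hRs' hs2R
    have hs2 : 0 < 2 * s := by positivity
    have link := normedBump_sub_normedBump (z := z) (z' := z) (w := z) (ρ := 2 * s) (K := 2)
      hs hs2 (by simp only [dist_self]; linarith) (by simp) (by linarith) (by linarith)
    refine ((link.add (ih hs2 (by rw [pow_succ] at hRs; linarith) (by linarith))).congr
      fun y => by simp).mono ?_
    have h4 : (2 * 2 : ℝ) ^ n ≤ 12 ^ n * (R / s) :=
      (pow_le_pow_left₀ (by norm_num) (by norm_num) n).trans
        (le_mul_of_one_le_right (by positivity) ((one_le_div hs).mpr hsR.le))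
    calc 2 * (2 * 2) ^ n + 2 * 12 ^ n * (2 * R / (2 * s))
        ≤ 2 * (12 ^ n * (R / s)) + 2 * 12 ^ n * (R / s) := by
          rw [mul_div_mul_left _ _ two_ne_zero]; gcongr
      _ = 2 * 12 ^ n * (2 * R / s) := by ring

variable {b : E n → ℝ} {x : E n} {s M R : ℝ}

lemma exists_mul_cutoff_sub_of_lt_radius (hs : 0 < s) (hR : 0 < R) (hb : Continuous b)
    (hM : ∀ y, |b y| ≤ M) (hRs : R < s) :
    ∃ β : ℝ, HasContAtomDecomp n
      (fun y => b y * cutoff R y - β * normedBump 0 (mul_pos two_pos hR) y)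
      (7 * 12 ^ n * M * volume.real (closedBall x s)) := by
  have hM0 : 0 ≤ M := (abs_nonneg _).trans (hM x)
  have hgM : ∀ y, |b y * cutoff R y| ≤ M := fun y => by
    rw [abs_mul]
    exact (mul_le_of_le_one_right (abs_nonneg _) (abs_cutoff_le_one y)).trans (hM y)
  refine ⟨_, (sub_integral_mul_normedBump (mul_pos two_pos hR) (hb.mul continuous_cutoff)
    ((support_mul_subset_right _ _).trans (support_cutoff_subset hR)) hgM).mono ?_⟩
  have hV := volume_real_closedBall_le_pow_mul (x := (0 : E n)) (y := x) (r := 2 * R) (c := 2)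
    (by positivity) hs (by linarith)
  have h2 : (2 : ℝ) ^ n ≤ 12 ^ n := pow_le_pow_left₀ (by norm_num) (by norm_num) n
  have h4 : (4 : ℝ) ^ n ≤ 12 ^ n := pow_le_pow_left₀ (by norm_num) (by norm_num) n
  calc (1 + 2 ^ n) * M * volume.real (closedBall (0 : E n) (2 * R))
      ≤ (1 + 2 ^ n) * M * (2 ^ n * volume.real (closedBall x s)) := by gcongr
    _ = (2 ^ n + 4 ^ n) * (M * volume.real (closedBall x s)) := by
        rw [show (4 : ℝ) ^ n = 2 ^ n * 2 ^ n by rw [← mul_pow]; norm_num]; ring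
    _ ≤ 7 * 12 ^ n * (M * volume.real (closedBall x s)) := by
        gcongr; linarith [pow_pos (show (0 : ℝ) < 12 by norm_num) n]
    _ = 7 * 12 ^ n * M * volume.real (closedBall x s) := by ring

/-- `b χ = χ(x) b + b (χ - χ(x))`. The second term is `s/R`-small because `χ` is `1/R`-Lipschitz,
which pays for carrying its mean to the centre along the dyadic chain, of cost `≲ R/s`. -/
lemma exists_mul_cutoff_sub_of_radius_le (hs : 0 < s) (hR : 0 < R) (hb : Continuous b)
    (hsupp : support b ⊆ closedBall x s) (hint : ∫ y, b y = 0) (hM : ∀ y, |b y| ≤ M)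
    (hsR : s ≤ R) (hx : ‖x‖ ≤ 2 * R + s) :
    ∃ β : ℝ, HasContAtomDecomp n
      (fun y => b y * cutoff R y - β * normedBump 0 (mul_pos two_pos hR) y)
      (7 * 12 ^ n * M * volume.real (closedBall x s)) := by
  have hM0 : 0 ≤ M := (abs_nonneg _).trans (hM x)
  set V := volume.real (closedBall x s)
  set e : E n → ℝ := fun y => b y * (cutoff R y - cutoff R x)
  have he : Continuous e := hb.mul (continuous_cutoff.sub continuous_const)
  have hesupp : support e ⊆ closedBall x s := (support_mul_subset_left _ _).trans hsupp
  have heM : ∀ y, |e y| ≤ s / R * M := abs_mul_cutoff_sub_cutoff_le hR hs.le hsupp hM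
  set m := ∫ y, e y
  have hm : |m| ≤ s / R * M * V :=
    abs_integral_le_of_support_subset measure_closedBall_lt_top.ne hesupp (ae_of_all _ heM)
  obtain ⟨k, hk⟩ := pow_unbounded_of_one_lt (R / s) one_lt_two
  have hchain := normedBump_sub_normedBump_zero hR (by linarith) k hs
    (by rw [div_lt_iff₀ hs] at hk; linarith) (by linarith)
  refine ⟨m, ((((of_abs_le hs hb hsupp hint hM).const_mul (cutoff R x)).add
    ((sub_integral_mul_normedBump hs he hesupp heM).add (hchain.const_mul m))).congr
    fun y => ?_).mono ?_⟩
  · simp only [Pi.add_apply, e]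
    ring
  have h1 : |cutoff R x| * (M * V) ≤ M * V :=
    mul_le_of_le_one_left (mul_nonneg hM0 measureReal_nonneg) (abs_cutoff_le_one x)
  have h2 : (1 + 2 ^ n) * (s / R * M) * V ≤ (1 + 2 ^ n) * (M * V) := by
    have : s / R ≤ 1 := (div_le_one hR).mpr hsR
    rw [mul_assoc]
    gcongr
    exact mul_le_of_le_one_left hM0 this
  have h3 : |m| * (2 * 12 ^ n * (2 * R / s)) ≤ 4 * 12 ^ n * (M * V) := calc
    _ ≤ s / R * M * V * (2 * 12 ^ n * (2 * R / s)) := by gcongr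
    _ = 4 * 12 ^ n * (M * V) := by field_simp; ring
  have h12 : (2 : ℝ) ^ n ≤ 12 ^ n := pow_le_pow_left₀ (by norm_num) (by norm_num) n
  have h1' : (1 : ℝ) ≤ 12 ^ n := one_le_pow₀ (by norm_num)
  calc _ ≤ (2 + 2 ^ n + 4 * 12 ^ n) * (M * V) := by linarith
    _ ≤ 7 * 12 ^ n * (M * V) := by gcongr; linarith
    _ = 7 * 12 ^ n * M * V := by ring

lemma exists_mul_cutoff_sub (hs : 0 < s) (hR : 0 < R) (hb : Continuous b)
    (hsupp : support b ⊆ closedBall x s) (hint : ∫ y, b y = 0) (hM : ∀ y, |b y| ≤ M) :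
    ∃ β : ℝ, HasContAtomDecomp n
      (fun y => b y * cutoff R y - β * normedBump 0 (mul_pos two_pos hR) y)
      (7 * 12 ^ n * M * volume.real (closedBall x s)) := by
  rcases lt_or_ge R s with hRs | hsR
  · exact exists_mul_cutoff_sub_of_lt_radius hs hR hb hM hRs
  rcases le_or_gt ‖x‖ (2 * R + s) with hx | hx
  · exact exists_mul_cutoff_sub_of_radius_le hs hR hb hsupp hint hM hsR hx
  have hM0 : 0 ≤ M := (abs_nonneg _).trans (hM x)
  refine ⟨0, (zero (by positivity)).congr fun y => ?_⟩
  by_cases hy : y ∈ closedBall x s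
  · have : y ∉ closedBall 0 (2 * R) := by
      rw [mem_closedBall_iff_norm] at hy
      rw [mem_closedBall_iff_norm, sub_zero, not_le]
      linarith [norm_sub_norm_le x y, norm_sub_rev x y]
    simp [support_subset_iff'.mp (support_cutoff_subset hR) y this]
  · simp [support_subset_iff'.mp hsupp y hy]

lemma of_eq_mul_cutoff_add {ρ : E n → ℝ} {κ : ℝ} (hR : 0 < R)
    (hg : Continuous g) (hM : ∀ y, |g y| ≤ M)
    (hρ : ∀ y, ρ y = g y * cutoff R y + κ * normedBump 0 (mul_pos two_pos hR) y)
    (hρ0 : ∫ y, ρ y = 0) :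
    HasContAtomDecomp n ρ ((1 + 2 ^ n) * M * volume.real (closedBall (0 : E n) (2 * R))) := by
  have hgc : Continuous fun y => g y * cutoff R y := hg.mul continuous_cutoff
  have hgM : ∀ y, |g y * cutoff R y| ≤ M := fun y => by
    rw [abs_mul]
    exact (mul_le_of_le_one_right (abs_nonneg _) (abs_cutoff_le_one y)).trans (hM y)
  have hsupp : support (fun y => g y * cutoff R y) ⊆ closedBall 0 (2 * R) :=
    (support_mul_subset_right _ _).trans (support_cutoff_subset hR)
  have hgi : Integrable (fun y => g y * cutoff R y) volume := integrable_of_support_subset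
    measure_closedBall_lt_top.ne hgc.aestronglyMeasurable hsupp (ae_of_all _ hgM)
  have hκ : κ = -∫ y, g y * cutoff R y := by
    simp_rw [hρ] at hρ0
    rw [integral_add hgi ((integrable_normedBump _ _).const_mul κ), integral_const_mul,
      integral_normedBump, mul_one] at hρ0
    linarith
  refine (sub_integral_mul_normedBump (mul_pos two_pos hR) hgc hsupp hgM).congr fun y => ?_
  rw [hρ y, hκ]
  ring

end HasContAtomDecomp

section Mollify

variable {a : E n → ℝ} {t : ℝ}

lemma continuous_normedBump_convolution (ht : 0 < t) (ha : LocallyIntegrable a volume) :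
    Continuous (normedBump 0 ht ⋆ a) :=
  (hasCompactSupport_normedBump 0 ht).continuous_convolution_left _ (continuous_normedBump 0 ht) ha

lemma _root_.IsInftyAtom.exists_abs_convolution_le (ha : IsInftyAtom n a) (ht : 0 < t) :
    ∃ x s M, 0 < s ∧ support (normedBump 0 ht ⋆ a) ⊆ closedBall x s ∧
      (∀ y, |(normedBump 0 ht ⋆ a) y| ≤ M) ∧ M * volume.real (closedBall x s) ≤ 4 ^ n := by
  obtain ⟨x, r, hr, hsupp, hbound⟩ := ha.exists_ae_abs_le
  have hsupp' : support (normedBump 0 ht ⋆ a) ⊆ closedBall x (t + r) := calc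
    support (normedBump 0 ht ⋆ a) ⊆ support (normedBump 0 ht) + support a :=
        support_convolution_subset _
    _ ⊆ closedBall 0 t + closedBall x r := add_subset_add (support_normedBump_subset 0 ht) hsupp
    _ = closedBall x (t + r) := by rw [closedBall_add_closedBall ht.le hr.le, zero_add]
  have h24 : (2 : ℝ) ^ n ≤ 4 ^ n := pow_le_pow_left₀ (by norm_num) (by norm_num) n
  rcases le_or_gt t r with htr | hrt
  · refine ⟨x, t + r, _, by positivity, hsupp', abs_convolution_le_of_ae_abs_le
      (normedBump_nonneg 0 ht) (integral_normedBump 0 ht) hbound, ?_⟩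
    have hV := volume_real_closedBall_pos x hr
    rw [inv_mul_le_iff₀ hV, mul_comm]
    exact (volume_real_closedBall_le_pow_mul (c := 2) (by positivity) hr (by linarith)).trans
      (by gcongr)
  · refine ⟨x, t + r, _, by positivity, hsupp', fun y =>
      (abs_convolution_le_of_abs_le (abs_normedBump_le 0 ht) ha.integrable y).trans
        (mul_le_of_le_one_right (by positivity) ha.integral_abs_le_one), ?_⟩
    have hV := volume_real_closedBall_pos (0 : E n) ht
    rw [div_mul_eq_mul_div, div_le_iff₀ hV, show (4 : ℝ) ^ n = 2 ^ n * 2 ^ n by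
      rw [← mul_pow]; norm_num, mul_assoc]
    gcongr
    exact volume_real_closedBall_le_pow_mul (by positivity) ht (by linarith)

lemma _root_.IsInftyAtom.exists_convolution_mul_cutoff_sub (ha : IsInftyAtom n a) (ht : 0 < t)
    {R : ℝ} (hR : 0 < R) :
    ∃ β : ℝ, HasContAtomDecomp n
      (fun y => (normedBump 0 ht ⋆ a) y * cutoff R y - β * normedBump 0 (mul_pos two_pos hR) y)
      (7 * 12 ^ n * 4 ^ n) := by
  obtain ⟨x, s, M, hs, hsupp, hM, hMV⟩ := ha.exists_abs_convolution_le ht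
  have hint : ∫ y, (normedBump 0 ht ⋆ a) y = 0 := by
    simp [integral_convolution _ (integrable_normedBump 0 ht) ha.integrable, ha.integral_eq_zero]
  obtain ⟨β, hβ⟩ := HasContAtomDecomp.exists_mul_cutoff_sub hs hR
    (continuous_normedBump_convolution ht ha.integrable.locallyIntegrable) hsupp hint hM
  exact ⟨β, hβ.mono (by rw [mul_assoc]; gcongr)⟩

end Mollify

lemma exists_forall_abs_sub_sum_convolution_le {f : E n → ℝ} (hf : Continuous f)
    (hfc : HasCompactSupport f) {l : ℕ → ℝ} {a : ℕ → E n → ℝ} (ha : ∀ j, IsInftyAtom n (a j))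
    (htend : Tendsto (fun N => eLpNorm (fun x => f x - ∑ j ∈ Finset.range N, l j * a j x) 1 volume)
      atTop (nhds 0)) {ε : ℝ} (hε : 0 < ε) :
    ∃ t, ∃ ht : 0 < t, ∃ N, ∀ y,
      |f y - ∑ j ∈ Finset.range N, l j * (normedBump 0 ht ⋆ a j) y| ≤ ε := by
  obtain ⟨t, ht, hδ⟩ := Metric.uniformContinuous_iff.mp
    (hfc.uniformContinuous_of_continuous hf) (ε / 2) (half_pos hε)
  set A := 2 ^ n / volume.real (closedBall (0 : E n) t)
  have hA : 0 < A := div_pos (by positivity) (volume_real_closedBall_pos 0 ht)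
  obtain ⟨N, hN⟩ := (htend.eventually
    (gt_mem_nhds (ENNReal.ofReal_pos.mpr (div_pos (half_pos hε) hA)))).exists
  refine ⟨t, ht, N, fun y => ?_⟩
  set S := fun x => f x - ∑ j ∈ Finset.range N, l j * a j x
  have hSi : Integrable S volume := (hf.integrable_of_hasCompactSupport hfc).sub
    (integrable_finsetSum _ fun j _ => (ha j).integrable.const_mul (l j))
  have hS : ∫ x, |S x| < ε / 2 / A := by
    have : ∫ x, |S x| = (eLpNorm S 1 volume).toReal := by
      rw [eLpNorm_one_eq_lintegral_enorm, ← integral_norm_eq_lintegral_enorm hSi.1]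
      simp only [Real.norm_eq_abs]
    exact this ▸ ENNReal.toReal_lt_of_lt_ofReal hN
  have h1 : |(normedBump 0 ht ⋆ f) y - f y| ≤ ε / 2 := by
    rw [← Real.dist_eq]
    exact dist_convolution_le (half_pos hε).le (support_normedBump 0 ht).subset
      (normedBump_nonneg 0 ht) (integral_normedBump 0 ht) hf.aestronglyMeasurable
      fun x hx => (hδ (mem_ball.mp hx)).le
  have h2 : |(normedBump 0 ht ⋆ S) y| ≤ ε / 2 := calc
    _ ≤ A * ∫ x, |S x| := abs_convolution_le_of_abs_le (abs_normedBump_le 0 ht) hSi y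
    _ ≤ ε / 2 := by rw [lt_div_iff₀ hA, mul_comm] at hS; exact hS.le
  rw [convolution_sub_sum_apply _ _ (hasCompactSupport_normedBump 0 ht) (continuous_normedBump 0 ht)
    hf.locallyIntegrable fun j => (ha j).integrable.locallyIntegrable] at h2
  calc _ = |(f y - (normedBump 0 ht ⋆ f) y) +
        ((normedBump 0 ht ⋆ f) y - ∑ j ∈ Finset.range N, l j * (normedBump 0 ht ⋆ a j) y)| := by
        ring_nf
    _ ≤ ε / 2 + ε / 2 := (abs_add_le _ _).trans (add_le_add (by rwa [abs_sub_comm]) h2)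
    _ = ε := add_halves ε

lemma hasContAtomDecomp_of_abs_sub_sum_convolution_le {f : E n → ℝ} (hf : Continuous f)
    (hfin : MemH1Fin n (IsInftyAtom n) f) {R t η K : ℝ} (hR : 0 < R) (ht : 0 < t)
    (hfR : support f ⊆ closedBall 0 R) {N : ℕ} {l β : ℕ → ℝ} {a : ℕ → E n → ℝ}
    (ha : ∀ j, IsInftyAtom n (a j))
    (hβ : ∀ j, HasContAtomDecomp n (fun y => (normedBump 0 ht ⋆ a j) y * cutoff R y -
      β j * normedBump 0 (mul_pos two_pos hR) y) K)
    (hη : ∀ y, |f y - ∑ j ∈ Finset.range N, l j * (normedBump 0 ht ⋆ a j) y| ≤ η) :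
    HasContAtomDecomp n f ((∑ j ∈ Finset.range N, |l j|) * K +
      (1 + 2 ^ n) * η * volume.real (closedBall (0 : E n) (2 * R))) := by
  set D := ∑ j ∈ Finset.range N, fun y =>
    l j * ((normedBump 0 ht ⋆ a j) y * cutoff R y - β j * normedBump 0 (mul_pos two_pos hR) y)
  have hD : HasContAtomDecomp n D (∑ j ∈ Finset.range N, |l j| * K) :=
    .finset_sum _ fun j _ => (hβ j).const_mul (l j)
  have hfχ : ∀ y, f y * cutoff R y = f y := fun y => by
    by_cases hy : y ∈ closedBall (0 : E n) R
    · rw [cutoff_eq_one hR (mem_closedBall_zero_iff.mp hy), mul_one]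
    · rw [support_subset_iff'.mp hfR y hy, zero_mul]
  have hrest := HasContAtomDecomp.of_eq_mul_cutoff_add hR
    (ρ := f - D) (κ := ∑ j ∈ Finset.range N, l j * β j)
    (g := fun y => f y - ∑ j ∈ Finset.range N, l j * (normedBump 0 ht ⋆ a j) y)
    (hf.sub (continuous_finsetSum _ fun j _ => continuous_const.mul
      (continuous_normedBump_convolution ht (ha j).integrable.locallyIntegrable)))
    hη (fun y => ?_) ?_
  · rw [Finset.sum_mul]
    exact (hD.add hrest).congr fun y => by simp
  · have hDy : D y = (∑ j ∈ Finset.range N, l j * (normedBump 0 ht ⋆ a j) y) * cutoff R y -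
        (∑ j ∈ Finset.range N, l j * β j) * normedBump 0 (mul_pos two_pos hR) y := by
      simp only [D, Finset.sum_apply]
      rw [Finset.sum_mul, Finset.sum_mul, ← Finset.sum_sub_distrib]
      exact Finset.sum_congr rfl fun j _ => by ring
    rw [Pi.sub_apply, hDy, sub_mul, hfχ]
    ring
  · simp only [Pi.sub_apply]
    rw [integral_sub hfin.integrable hD.memH1Fin.integrable, hfin.integral_eq_zero,
      hD.memH1Fin.integral_eq_zero, sub_zero]

end ContinuousAtoms

open ContinuousAtoms in
theorem finite_decomposition_continuous_atoms (n : ℕ) :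
    ∃ C : ℝ, 0 < C ∧
      ∀ f : E n → ℝ, Continuous f → MemH1Fin n (IsInftyAtom n) f →
        ∃ (N : ℕ) (l : Fin N → ℝ) (a : Fin N → E n → ℝ),
          (∀ j, IsInftyAtom n (a j) ∧ Continuous (a j)) ∧
          (∀ x, f x = ∑ j, l j * a j x) ∧
          (∑ j, |l j|) ≤ C * H1Norm n (IsInftyAtom n) f := by
  set K : ℝ := 7 * 12 ^ n * 4 ^ n
  refine ⟨2 * K + 1, by positivity, fun f hf hfin => ?_⟩
  change HasContAtomDecomp n f _
  set h := H1Norm n (IsInftyAtom n) f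
  rcases (h1Norm_nonneg _ f).eq_or_lt with h0 | hpos
  · rw [hfin.eq_zero_of_h1Norm_eq_zero hf h0.symm]
    exact HasContAtomDecomp.zero (mul_nonneg (by positivity) h0.le)
  obtain ⟨R, hR, hfR⟩ := hfin.isBounded_support.subset_closedBall_lt 0 0
  obtain ⟨_, ⟨l, a, ha, hl, htend, rfl⟩, hlt⟩ :=
    exists_lt_of_csInf_lt (hfin.h1Costs_nonempty isInftyAtom_zero) (by linarith : h < 2 * h)
  set V := volume.real (closedBall (0 : E n) (2 * R))
  have hV : 0 < V := volume_real_closedBall_pos 0 (mul_pos two_pos hR)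
  obtain ⟨t, ht, N, hN⟩ := exists_forall_abs_sub_sum_convolution_le hf
    (.intro (isCompact_closedBall 0 R) (support_subset_iff'.mp hfR)) ha htend
    (ε := h / ((1 + 2 ^ n) * V)) (by positivity)
  choose β hβ using fun j => (ha j).exists_convolution_mul_cutoff_sub ht hR
  refine (hasContAtomDecomp_of_abs_sub_sum_convolution_le hf hfin hR ht hfR ha hβ hN).mono ?_
  have hsum := hl.sum_le_tsum (Finset.range N) fun j _ => abs_nonneg _
  have hcost : (1 + 2 ^ n) * (h / ((1 + 2 ^ n) * V)) * V = h := by field_simp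
  nlinarith [show 0 ≤ K by positivity]
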